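/- arXiv:math/0611915 — 5 statements merged into one kernel-verified Lean document; each statement's English description precedes it below -/
import Mathlib

section
/- Let n_2/n_1 be a rational number with n_1, n_2 coprime positive integers, n_2 < n_1, n_1 > 1, with finite continued fraction expansion [a_0; a_1, …, a_L] and associated Euclidean remainders n_1 > n_2 > n_3 > … > n_{L+1} = 1, and let r_0 be a real number with continued fraction expansion [b_0; b_1, …] and remainders r_1, r_2, …. Set d_i = r_i − n_{i+2}/n_{i+1}. Suppose k is a nonnegative integer with k < L and a_i = b_i for all i ≤ k. Then: (i) if k < L−1 and |d_k| < 1/(n_{k+1}(n_{k+1}−1)), then a_{k+1} = b_{k+1}; (ii) if k = L−1 and |d_{L−1}| < 1/(n_L(n_L+1)), then b_L = a_L or b_L = a_L − 1. -/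
/-!
Since `b_{k+1} = ⌊1/r_k⌋` and `n_{k+1}/n_{k+2} = a_{k+1} + n_{k+3}/n_{k+2}` with
`1 ≤ n_{k+3} < n_{k+2}`, it suffices to locate `r_k` between `1/(a_{k+1}+1)` and `1/a_{k+1}`.
Both endpoints lie at distance at least `1/(n_{k+1}(n_{k+1}-1))` from `n_{k+2}/n_{k+1}`, by a
cross-multiplication using `n_{k+1} = a_{k+1} n_{k+2} + n_{k+3}`.  In the last step
`n_{L+1} = 1`, so `a_L = n_L`, and the weaker bound only traps `1/r_{L-1}` in `(a_L - 1, a_L + 1)`.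
-/

/-- The remainders `r_0, r_1, r_2, …` of the continued fraction algorithm
applied to a real number `r`: `r_0 = r - ⌊r⌋` and `r_{i+1} = 1/r_i - ⌊1/r_i⌋`. -/
noncomputable def cfRem (r : ℝ) : ℕ → ℝ
  | 0 => Int.fract r
  | i + 1 => Int.fract (cfRem r i)⁻¹

/-- The partial quotients `b_0, b_1, b_2, …` of the continued fraction
expansion of a real number `r`: `b_0 = ⌊r⌋` and `b_{i+1} = ⌊1/r_i⌋`. -/
noncomputable def cfB (r : ℝ) : ℕ → ℤ
  | 0 => ⌊r⌋
  | i + 1 => ⌊(cfRem r i)⁻¹⌋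

theorem lt_of_forall_succ_lt_of_le {α : Type*} [Preorder α] {f : ℕ → α} {a N : ℕ}
    (h : ∀ k, a ≤ k → k ≤ N → f (k + 1) < f k) {j : ℕ} (haj : a ≤ j) (hjN : j ≤ N) :
    f (N + 1) < f j := by
  induction hjN using Nat.decreasingInduction with
  | self => exact h N haj le_rfl
  | of_succ k hk ih => exact (ih (haj.trans k.le_succ)).trans (h k haj hk.le)

theorem floor_inv_eq_of_abs_sub_div_lt {p q s A : ℤ} {y : ℝ} (hs : 0 < s) (hsq : s < q)
    (hqp : q < p) (hp : p = A * q + s) (hy : |y - q / p| < 1 / (p * (p - 1))) :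
    ⌊y⁻¹⌋ = A := by
  have hA : 1 ≤ A := by nlinarith
  have hAp : A + 2 ≤ p := by nlinarith
  have hp1 : (1 : ℝ) < p := by exact_mod_cast (hA.trans_lt (by omega) : 1 < p)
  have hA0 : (0 : ℝ) < A := by exact_mod_cast hA
  have hlo : 1 / ((A : ℝ) + 1) ≤ q / p - 1 / (p * (p - 1)) := by
    have key : p * (p - 1) ≤ (q * (p - 1) - 1) * (A + 1) := by nlinarith
    rw [div_sub_div _ _ (by positivity) (by positivity), div_le_div_iff₀ (by positivity) (by positivity)]
    have := (Int.cast_le (R := ℝ)).mpr key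
    push_cast at this
    nlinarith
  have hhi : q / p + 1 / (p * (p - 1)) ≤ 1 / (A : ℝ) := by
    have key : (q * (p - 1) + 1) * A ≤ p * (p - 1) := by nlinarith
    rw [div_add_div _ _ (by positivity) (by positivity), div_le_div_iff₀ (by positivity) (by positivity)]
    have := (Int.cast_le (R := ℝ)).mpr key
    push_cast at this
    nlinarith
  obtain ⟨hy₁, hy₂⟩ := abs_lt.mp hy
  have hy0 : 0 < y := lt_of_lt_of_le (by positivity) (by linarith : 1 / ((A : ℝ) + 1) ≤ y)
  rw [Int.floor_eq_iff, ← one_div]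
  constructor
  · exact (le_one_div hA0 hy0).mpr (by linarith)
  · exact (one_div_lt hy0 (by positivity)).mpr (by linarith)

theorem floor_inv_eq_or_eq_sub_one_of_abs_sub_inv_lt {p : ℤ} {y : ℝ} (hp : 0 < p)
    (hy : |y - 1 / p| < 1 / (p * (p + 1))) : ⌊y⁻¹⌋ = p ∨ ⌊y⁻¹⌋ = p - 1 := by
  have hp1 : (1 : ℝ) ≤ p := by exact_mod_cast hp
  obtain ⟨hy₁, hy₂⟩ := abs_lt.mp hy
  have hinv_succ : 1 / ((p : ℝ) + 1) = 1 / p - 1 / (p * (p + 1)) := by field_simp; ring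
  have hhi : (p - 1) * (1 / p + 1 / (p * (p + 1))) < (1 : ℝ) := by
    rw [div_add_div _ _ (by positivity) (by positivity), mul_div_assoc', div_lt_one (by positivity)]
    nlinarith
  have hy0 : 0 < y := lt_of_lt_of_le (by positivity) (by linarith : 1 / ((p : ℝ) + 1) ≤ y)
  have h₁ : y⁻¹ < p + 1 := by
    rw [← one_div]
    exact (one_div_lt hy0 (by positivity)).mpr (by linarith)
  have h₂ : (p : ℝ) - 1 < y⁻¹ := by
    rw [← one_div, lt_div_iff₀ hy0]
    calc ((p : ℝ) - 1) * y ≤ (p - 1) * (1 / p + 1 / (p * (p + 1))) := by gcongr; linarith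
      _ < 1 := hhi
  have : ⌊y⁻¹⌋ < p + 1 := Int.floor_lt.mpr (by exact_mod_cast h₁)
  have : p - 1 ≤ ⌊y⁻¹⌋ := Int.le_floor.mpr (by push_cast; exact h₂.le)
  omega

theorem stmt_3_general (L : ℕ) (n a : ℕ → ℤ) (r : ℝ)
    (hdec : ∀ k, 1 ≤ k → k ≤ L + 1 → n (k + 1) < n k)
    (hlast : n (L + 1) = 1) (hlast2 : n (L + 2) = 0)
    (heuclid : ∀ k, 1 ≤ k → k ≤ L → n k = a k * n (k + 1) + n (k + 2))
    (k : ℕ) :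
    (k + 1 < L →
      |cfRem r k - (n (k + 2) : ℝ) / (n (k + 1) : ℝ)| <
        1 / ((n (k + 1) : ℝ) * ((n (k + 1) : ℝ) - 1)) →
      a (k + 1) = cfB r (k + 1)) ∧
    (k + 1 = L →
      |cfRem r k - (n (k + 2) : ℝ) / (n (k + 1) : ℝ)| <
        1 / ((n (k + 1) : ℝ) * ((n (k + 1) : ℝ) + 1)) →
      cfB r L = a L ∨ cfB r L = a L - 1) := by
  have hpos : ∀ j, 1 ≤ j → j ≤ L + 1 → 0 < n j := fun j h1 hj =>
    hlast2 ▸ lt_of_forall_succ_lt_of_le hdec h1 hj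
  refine ⟨fun hk hd => ?_, fun hk hd => ?_⟩
  · exact (floor_inv_eq_of_abs_sub_div_lt (hpos (k + 3) (by omega) (by omega))
      (hdec (k + 2) (by omega) (by omega)) (hdec (k + 1) (by omega) (by omega))
      (heuclid (k + 1) (by omega) (by omega)) hd).symm
  · subst hk
    have hnL : n (k + 2) = 1 := hlast
    have haL : a (k + 1) = n (k + 1) := by
      simpa [hnL, hlast2] using (heuclid (k + 1) (by omega) le_rfl).symm
    rw [hnL, Int.cast_one] at hd
    rw [haL]
    exact floor_inv_eq_or_eq_sub_one_of_abs_sub_inv_lt (hpos (k + 1) (by omega) (by omega)) hd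

/-- Lemma 2: let `n 2 / n 1` be a rational number with coprime positive
numerator and denominator, `n 2 < n 1`, `n 1 > 1`, whose continued fraction
expansion (produced by the Euclidean algorithm, with remainders
`n 1 > n 2 > … > n (L+1) = 1 > n (L+2) = 0`) is `[a 0; a 1, …, a L]`, and let
`r` be a real approximation with partial quotients `b i = cfB r i` and
remainders `r_i = cfRem r i`.  Write `d i = r_i − n (i+2) / n (i+1)`.
If `a i = b i` for all `i ≤ k` with `k < L`, then:
(i) if `k < L − 1` and `|d k| < 1/(n (k+1) (n (k+1) − 1))`, then
`a (k+1) = b (k+1)`;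
(ii) if `k = L − 1` and `|d (L−1)| < 1/(n L (n L + 1))`, then
`b L = a L` or `b L = a L − 1`. -/
theorem stmt_3 (L : ℕ) (hL : 1 ≤ L) (n a : ℕ → ℤ) (r : ℝ)
    (hn1 : 1 < n 1) (hn2 : 0 < n 2) (h21 : n 2 < n 1)
    (hcop : Int.gcd (n 2) (n 1) = 1)
    (hdec : ∀ k, 1 ≤ k → k ≤ L + 1 → n (k + 1) < n k)
    (hlast : n (L + 1) = 1) (hlast2 : n (L + 2) = 0)
    (heuclid : ∀ k, 1 ≤ k → k ≤ L → n k = a k * n (k + 1) + n (k + 2))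
    (ha0 : a 0 = 0)
    (haCF : ∀ i, i ≤ L → a i = cfB ((n 2 : ℝ) / (n 1 : ℝ)) i)
    (k : ℕ) (hkL : k < L)
    (hab : ∀ i, i ≤ k → a i = cfB r i) :
    (k + 1 < L →
      |cfRem r k - (n (k + 2) : ℝ) / (n (k + 1) : ℝ)| <
        1 / ((n (k + 1) : ℝ) * ((n (k + 1) : ℝ) - 1)) →
      a (k + 1) = cfB r (k + 1)) ∧
    (k + 1 = L →
      |cfRem r k - (n (k + 2) : ℝ) / (n (k + 1) : ℝ)| <
        1 / ((n (k + 1) : ℝ) * ((n (k + 1) : ℝ) + 1)) →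
      cfB r L = a L ∨ cfB r L = a L - 1) :=
  stmt_3_general L n a r hdec hlast hlast2 heuclid k
end

section
/- Let n_2/n_1 be a rational number with n_1, n_2 coprime positive integers, n_2 < n_1, n_1 > 1, with finite continued fraction expansion [a_0; a_1, …, a_L], and let r_0 be a real number with continued fraction expansion [b_0; b_1, …, b_M] (finite or infinite). If |r_0 − n_2/n_1| < 1/(4 n_1 (n_1 − 1)), then one of the following holds: (i) b_i = a_i for all i = 0, 1, …, L; or (ii) b_i = a_i for i = 0, 1, …, L−1, b_L = a_L − 1, and b_{L+1} = 1. -/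
def CFAgree (b a : ℕ → ℤ) (L : ℕ) : Prop :=
  (∀ i ≤ L, b i = a i) ∨ ((∀ i < L, b i = a i) ∧ b L = a L - 1 ∧ b (L + 1) = 1)

theorem fract_cfRem (r : ℝ) : ∀ j, Int.fract (cfRem r j) = cfRem r j
  | 0 => Int.fract_fract r
  | _ + 1 => Int.fract_fract _

theorem floor_cfRem (r : ℝ) (j : ℕ) : ⌊cfRem r j⌋ = 0 := by
  rw [← fract_cfRem, Int.floor_fract]

theorem cfRem_cfRem (r : ℝ) (j : ℕ) : ∀ i, cfRem (cfRem r j) i = cfRem r (i + j)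
  | 0 => by rw [cfRem, fract_cfRem, Nat.zero_add]
  | i + 1 => by rw [cfRem, cfRem_cfRem r j i, Nat.add_right_comm]; rfl

theorem cfB_cfRem (r : ℝ) (j i : ℕ) : cfB (cfRem r j) (i + 1) = cfB r (i + j + 1) := by
  simp only [cfB, cfRem_cfRem]

theorem cfAgree_succ {r x : ℝ} {L : ℕ} (h₀ : cfB r 0 = cfB x 0) (h₁ : cfB r 1 = cfB x 1)
    (h : CFAgree (cfB (cfRem r 1)) (cfB (cfRem x 1)) L) : CFAgree (cfB r) (cfB x) (L + 1) := by
  have hr : ∀ i, cfB r (i + 2) = cfB (cfRem r 1) (i + 1) := fun i => (cfB_cfRem r 1 i).symm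
  have hx : ∀ i, cfB x (i + 2) = cfB (cfRem x 1) (i + 1) := fun i => (cfB_cfRem x 1 i).symm
  have hlift : ∀ M, (∀ i < M, cfB (cfRem r 1) i = cfB (cfRem x 1) i) →
      ∀ i < M + 1, cfB r i = cfB x i := by
    intro M hM i hi
    rcases i with _ | _ | i
    · exact h₀
    · exact h₁
    · rw [hr, hx]; exact hM _ (by omega)
  rcases h with h | ⟨h, hL, hL₁⟩
  · exact Or.inl fun i hi => hlift (L + 1) (fun i hi' => h i (by omega)) i (by omega)
  · refine Or.inr ⟨hlift L h, ?_, hr L ▸ hL₁⟩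
    rcases L with _ | L
    · simp [cfB, floor_cfRem] at hL
    · rw [hr, hx]; exact hL

theorem fract_intCast_div_eq_emod (m : ℤ) {n : ℤ} (hn : 0 < n) :
    Int.fract ((m : ℝ) / n) = ((m % n : ℤ) : ℝ) / n := by
  lift n to ℕ using hn.le
  simpa using Int.fract_div_intCast_eq_div_intCast_mod (k := ℝ) (m := m) (n := n)

theorem fract_intCast_div {m n : ℤ} (hm : 0 ≤ m) (hmn : m < n) :
    Int.fract ((m : ℝ) / n) = m / n := by
  rw [fract_intCast_div_eq_emod m (hm.trans_lt hmn), Int.emod_eq_of_lt hm hmn]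

theorem floor_eq_floor_of_abs_sub_lt {y z δ : ℝ} (h : |y - z| < δ) (h₁ : δ ≤ Int.fract z)
    (h₂ : Int.fract z + δ ≤ 1) : ⌊y⌋ = ⌊z⌋ := by
  have := Int.floor_add_fract z
  rw [abs_lt] at h
  exact Int.floor_eq_iff.2 ⟨by linarith, by linarith⟩

theorem le_div_and_div_add_le_one {A B : ℝ} (hB : 1 ≤ B) (hBA : B + 1 ≤ A) :
    1 / (4 * A * (A - 1)) ≤ B / A ∧ B / A + 1 / (4 * A * (A - 1)) ≤ 1 := by
  have hA : 0 < A := by linarith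
  have he : 1 / (4 * A * (A - 1)) ≤ 1 / A := one_div_le_one_div_of_le hA (by nlinarith)
  refine ⟨he.trans (by gcongr), ?_⟩
  calc B / A + 1 / (4 * A * (A - 1)) ≤ (B + 1) / A := by rw [add_div]; linarith
    _ ≤ 1 := (div_le_one hA).2 hBA

theorem abs_inv_sub_inv_lt {A B r : ℝ} (hB : 1 < B) (hBA : B + 1 ≤ A)
    (hr : |r - B / A| < 1 / (4 * A * (A - 1))) :
    |r⁻¹ - A / B| < 1 / (4 * B * (B - 1)) := by
  set x := B / A with hx
  set e := 1 / (4 * A * (A - 1)) with he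
  have hA : 0 < A := by linarith
  have hA₁ : 0 < A - 1 := by linarith
  have hx₀ : 0 < x := by positivity
  have hex : e ≤ x := (le_div_and_div_add_le_one hB.le hBA).1
  obtain ⟨hr₁, hr₂⟩ := abs_lt.1 hr
  have hr₀ : 0 < r := by linarith
  have hdiff : r⁻¹ - A / B = (x - r) / (r * x) := by rw [hx]; field_simp
  -- `|r⁻¹ - x⁻¹| = |x - r| / (r x)` and `r x > (x - e) x ≥ 4 B (B - 1) e`
  have hmargin :
      (x - e) * x - e * (4 * B * (B - 1)) = B * (4 * A - 4 * B - 1) / (4 * A ^ 2 * (A - 1)) := by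
    rw [hx, he]; field_simp [hA₁.ne']; ring
  have hnum : 0 ≤ B * (4 * A - 4 * B - 1) / (4 * A ^ 2 * (A - 1)) := by
    apply div_nonneg <;> nlinarith
  have hden : 0 < 4 * B * (B - 1) := by nlinarith
  have hrx : 0 < r * x := mul_pos hr₀ hx₀
  rw [hdiff, abs_div, abs_of_pos hrx, div_lt_div_iff₀ hrx hden, one_mul]
  calc |x - r| * (4 * B * (B - 1)) < e * (4 * B * (B - 1)) := by
        rw [abs_sub_comm]; exact mul_lt_mul_of_pos_right hr hden
    _ ≤ (x - e) * x := by linarith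
    _ < r * x := mul_lt_mul_of_pos_right (by linarith) hx₀

theorem sub_half_lt_inv_and_inv_lt_add_one {q r : ℝ} (hq : 2 ≤ q)
    (hr : |r - 1 / q| < 1 / (4 * q * (q - 1))) : q - 1 / 2 < r⁻¹ ∧ r⁻¹ < q + 1 := by
  obtain ⟨hr₁, hr₂⟩ := abs_lt.1 hr
  have hq₀ : 0 < q := by linarith
  have hq₁ : 0 < q - 1 := by linarith
  have hq₂ : 0 < q - 1 / 2 := by linarith
  have hq₃ : 0 < q + 1 := by linarith
  have he : 0 < 4 * q * (q - 1) := by positivity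
  have hlo : 1 / (q + 1) ≤ 1 / q - 1 / (4 * q * (q - 1)) := by
    rw [div_sub_div _ _ hq₀.ne' he.ne', div_le_div_iff₀ hq₃ (by positivity)]
    nlinarith
  have hhi : 1 / q + 1 / (4 * q * (q - 1)) ≤ 1 / (q - 1 / 2) := by
    rw [div_add_div _ _ hq₀.ne' he.ne', div_le_div_iff₀ (by positivity) hq₂]
    nlinarith
  have hr₀ : 0 < r := by linarith [one_div_pos.2 hq₃]
  exact ⟨(lt_inv_comm₀ hq₂ hr₀).2 (by rw [← one_div]; linarith),
    (inv_lt_comm₀ hr₀ hq₃).2 (by rw [← one_div]; linarith)⟩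

theorem floor_eq_or_floor_inv_fract_eq_one {y : ℝ} {q : ℤ} (h₁ : q - 1 / 2 < y) (h₂ : y < q + 1) :
    ⌊y⌋ = q ∨ (⌊y⌋ = q - 1 ∧ ⌊(Int.fract y)⁻¹⌋ = 1) := by
  by_cases hy : (q : ℝ) ≤ y
  · exact Or.inl (Int.floor_eq_iff.2 ⟨hy, h₂⟩)
  · have hfl : ⌊y⌋ = q - 1 := Int.floor_eq_iff.2 ⟨by push_cast; linarith, by push_cast; linarith⟩
    have hf : Int.fract y = y - (q - 1) := by rw [Int.fract, hfl]; push_cast; ring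
    refine Or.inr ⟨hfl, Int.floor_eq_iff.2 ⟨?_, ?_⟩⟩
    · rw [hf, Int.cast_one, one_le_inv₀ (by linarith)]; linarith
    · rw [hf, Int.cast_one, one_add_one_eq_two, inv_lt_comm₀ (by linarith) two_pos]; linarith

theorem cfAgree_one_div {q : ℤ} (hq : 2 ≤ q) {r : ℝ} (hr : |r - 1 / q| < 1 / (4 * q * (q - 1))) :
    CFAgree (cfB r) (cfB (1 / q)) 1 := by
  obtain ⟨hlo, hhi⟩ := sub_half_lt_inv_and_inv_lt_add_one (by exact_mod_cast hq) hr
  have hr₀₁ : 0 ≤ r ∧ r < 1 := by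
    have hq' : (2 : ℝ) ≤ q := by exact_mod_cast hq
    have := one_lt_inv_iff₀.1 (show (1 : ℝ) < r⁻¹ by linarith)
    exact ⟨this.1.le, this.2⟩
  have hq₀₁ : 0 ≤ (1 / q : ℝ) ∧ (1 / q : ℝ) < 1 := by
    have := fract_intCast_div zero_le_one (by omega : (1 : ℤ) < q)
    exact Int.fract_eq_self.1 (by exact_mod_cast this)
  have h₀ : cfB r 0 = cfB (1 / q) 0 := by
    simp only [cfB, Int.floor_eq_zero_iff.2 hr₀₁, Int.floor_eq_zero_iff.2 hq₀₁]
  have h₁ : cfB (1 / q) 1 = q := by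
    rw [cfB, cfRem, Int.fract_eq_self.2 hq₀₁, one_div, inv_inv, Int.floor_intCast]
  have hcfB : cfB r 1 = ⌊r⁻¹⌋ ∧ cfB r 2 = ⌊(Int.fract r⁻¹)⁻¹⌋ := by
    simp [cfB, cfRem, Int.fract_eq_self.2 hr₀₁]
  rcases floor_eq_or_floor_inv_fract_eq_one hlo hhi with h | ⟨h, h₂⟩
  · left
    intro i hi
    interval_cases i
    · exact h₀
    · rw [h₁, hcfB.1, h]
  · right
    refine ⟨fun i hi => ?_, by rw [h₁, hcfB.1, h], by rw [hcfB.2, h₂]⟩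
    obtain rfl : i = 0 := by omega
    exact h₀

theorem cfRem_one_intCast_div {n₁ n₂ : ℤ} (hn₂ : 0 < n₂) (h₂₁ : n₂ < n₁) :
    cfRem ((n₂ : ℝ) / n₁) 1 = ((n₁ % n₂ : ℤ) : ℝ) / n₂ := by
  rw [cfRem, cfRem, fract_intCast_div hn₂.le h₂₁, inv_div, fract_intCast_div_eq_emod _ hn₂]

theorem cfAgree_of_emod_eq_zero {n₁ n₂ : ℤ} (hn₂ : 0 < n₂) (h₂₁ : n₂ < n₁) (h : n₁ % n₂ = 0)
    {r : ℝ} (hr : |r - n₂ / n₁| < 1 / (4 * (n₁ : ℝ) * (n₁ - 1))) :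
    CFAgree (cfB r) (cfB (n₂ / n₁)) 1 := by
  obtain ⟨q, rfl⟩ : n₂ ∣ n₁ := Int.dvd_of_emod_eq_zero h
  have hq : 2 ≤ q := by nlinarith
  have hq' : (2 : ℝ) ≤ q := by exact_mod_cast hq
  have hqn₁ : (q : ℝ) ≤ n₂ * q := le_mul_of_one_le_left (by linarith) (by exact_mod_cast hn₂)
  have hx : (n₂ : ℝ) / ↑(n₂ * q) = 1 / q := by
    push_cast; field_simp
  rw [hx] at hr ⊢
  push_cast at hr
  exact cfAgree_one_div hq (hr.trans_le (one_div_le_one_div_of_le (by nlinarith) (by nlinarith)))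

theorem cfB_eq_and_abs_cfRem_one_sub_lt {n₁ n₂ : ℤ} (hn₂ : 0 < n₂) (h₂₁ : n₂ < n₁)
    (h : 0 < n₁ % n₂) {r : ℝ} (hr : |r - n₂ / n₁| < 1 / (4 * (n₁ : ℝ) * (n₁ - 1))) :
    cfB r 0 = cfB (n₂ / n₁) 0 ∧ cfB r 1 = cfB (n₂ / n₁) 1 ∧
      |cfRem r 1 - (n₁ % n₂ : ℤ) / n₂| < 1 / (4 * (n₂ : ℝ) * (n₂ - 1)) := by
  set x : ℝ := n₂ / n₁ with hx
  have hfx : Int.fract x = x := fract_intCast_div hn₂.le h₂₁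
  have hfloor_x : ⌊x⌋ = 0 := by rw [← hfx]; exact Int.floor_fract x
  have hmargin_x := le_div_and_div_add_le_one (A := n₁) (B := n₂)
    (by exact_mod_cast hn₂) (by exact_mod_cast h₂₁)
  have hfloor_r : ⌊r⌋ = ⌊x⌋ :=
    floor_eq_floor_of_abs_sub_lt hr (hfx.symm ▸ hmargin_x.1) (hfx.symm ▸ hmargin_x.2)
  have hfr : Int.fract r = r := by rw [Int.fract, hfloor_r, hfloor_x, Int.cast_zero, sub_zero]
  have hfract_xinv : Int.fract x⁻¹ = (n₁ % n₂ : ℤ) / n₂ := by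
    rw [hx, inv_div, fract_intCast_div_eq_emod _ hn₂]
  have hlt : n₁ % n₂ < n₂ := Int.emod_lt_of_pos n₁ hn₂
  have hinv : |r⁻¹ - x⁻¹| < 1 / (4 * (n₂ : ℝ) * (n₂ - 1)) := by
    rw [hx, inv_div]
    exact abs_inv_sub_inv_lt (by exact_mod_cast (show 1 < n₂ by omega)) (by exact_mod_cast h₂₁) hr
  have hmargin := le_div_and_div_add_le_one (A := n₂) (B := ((n₁ % n₂ : ℤ) : ℝ))
    (by exact_mod_cast h) (by exact_mod_cast hlt)
  have hfloor_inv : ⌊r⁻¹⌋ = ⌊x⁻¹⌋ := floor_eq_floor_of_abs_sub_lt hinv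
    (hfract_xinv.symm ▸ hmargin.1) (hfract_xinv.symm ▸ hmargin.2)
  refine ⟨hfloor_r, by rw [cfB, cfB, cfRem, cfRem, hfr, hfx, hfloor_inv], ?_⟩
  rwa [← hfract_xinv, cfRem, cfRem, hfr, Int.fract, Int.fract, hfloor_inv,
    sub_sub_sub_cancel_right]

theorem cfAgree_of_abs_sub_lt (n₁ n₂ : ℤ) (hn₂ : 0 < n₂) (h₂₁ : n₂ < n₁) (L : ℕ)
    (hterm : cfRem ((n₂ : ℝ) / n₁) L = 0) (hnonterm : ∀ i < L, cfRem ((n₂ : ℝ) / n₁) i ≠ 0)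
    (r : ℝ) (hr : |r - n₂ / n₁| < 1 / (4 * (n₁ : ℝ) * (n₁ - 1))) :
    CFAgree (cfB r) (cfB (n₂ / n₁)) L := by
  induction L generalizing n₁ n₂ r with
  | zero =>
    rw [cfRem, fract_intCast_div hn₂.le h₂₁] at hterm
    exact absurd hterm (div_pos (by exact_mod_cast hn₂) (by exact_mod_cast hn₂.trans h₂₁)).ne'
  | succ L ih =>
    have hrem := cfRem_one_intCast_div hn₂ h₂₁
    rcases (Int.emod_nonneg n₁ hn₂.ne').eq_or_lt with h | h
    · obtain rfl : L = 0 := by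
        by_contra hL
        exact hnonterm 1 (by omega) (by rw [hrem, ← h, Int.cast_zero, zero_div])
      exact cfAgree_of_emod_eq_zero hn₂ h₂₁ h.symm hr
    · obtain ⟨h₀, h₁, hr'⟩ := cfB_eq_and_abs_cfRem_one_sub_lt hn₂ h₂₁ h hr
      refine cfAgree_succ h₀ h₁ ?_
      rw [hrem]
      exact ih n₂ (n₁ % n₂) h (Int.emod_lt_of_pos n₁ hn₂) (by rwa [← hrem, cfRem_cfRem])
        (fun i hi => by rw [← hrem, cfRem_cfRem]; exact hnonterm _ (by omega)) _ hr'

theorem stmt_5_general (n₁ n₂ : ℤ) (hn2 : 0 < n₂) (h21 : n₂ < n₁)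
    (L : ℕ)
    (hterm : cfRem ((n₂ : ℝ) / (n₁ : ℝ)) L = 0)
    (hnonterm : ∀ i < L, cfRem ((n₂ : ℝ) / (n₁ : ℝ)) i ≠ 0)
    (r : ℝ) (hr : |r - (n₂ : ℝ) / (n₁ : ℝ)| < 1 / (4 * (n₁ : ℝ) * ((n₁ : ℝ) - 1))) :
    (∀ i ≤ L, cfB r i = cfB ((n₂ : ℝ) / (n₁ : ℝ)) i) ∨
    ((∀ i < L, cfB r i = cfB ((n₂ : ℝ) / (n₁ : ℝ)) i) ∧
      cfB r L = cfB ((n₂ : ℝ) / (n₁ : ℝ)) L - 1 ∧ cfB r (L + 1) = 1) :=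
  cfAgree_of_abs_sub_lt n₁ n₂ hn2 h21 L hterm hnonterm r hr

/-- Theorem 5: let `n₂/n₁` be a rational number with `n₁, n₂` coprime positive
integers, `n₂ < n₁`, `n₁ > 1`, whose (finite) continued fraction expansion is
`[a 0; a 1, …, a L]` (i.e. the remainder `cfRem x L = 0` and all earlier
remainders are nonzero), and let `r` be a real number with continued fraction
expansion `[b 0; b 1, …]` where `b i = cfB r i`.  If
`|r − n₂/n₁| < 1/(4 n₁ (n₁ − 1))`, then either `b i = a i` for all `i ≤ L`,
or `b i = a i` for `i < L`, `b L = a L − 1` and `b (L+1) = 1`. -/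
theorem stmt_5 (n₁ n₂ : ℤ) (hn1 : 1 < n₁) (hn2 : 0 < n₂) (h21 : n₂ < n₁)
    (hcop : Int.gcd n₂ n₁ = 1) (L : ℕ)
    (hterm : cfRem ((n₂ : ℝ) / (n₁ : ℝ)) L = 0)
    (hnonterm : ∀ i < L, cfRem ((n₂ : ℝ) / (n₁ : ℝ)) i ≠ 0)
    (r : ℝ) (hr : |r - (n₂ : ℝ) / (n₁ : ℝ)| < 1 / (4 * (n₁ : ℝ) * ((n₁ : ℝ) - 1))) :
    (∀ i ≤ L, cfB r i = cfB ((n₂ : ℝ) / (n₁ : ℝ)) i) ∨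
    ((∀ i < L, cfB r i = cfB ((n₂ : ℝ) / (n₁ : ℝ)) i) ∧
      cfB r L = cfB ((n₂ : ℝ) / (n₁ : ℝ)) L - 1 ∧ cfB r (L + 1) = 1) :=
  stmt_5_general n₁ n₂ hn2 h21 L hterm hnonterm r hr
end

section
/- Let n_0/n_1 be a reduced rational number with n_0, n_1 coprime positive integers, let N be an integer with N ≥ max{n_1, 2}, let K be a positive integer, let [a_0; a_1, …, a_L] be the continued fraction expansion of n_0/n_1, and let r ≠ n_0/n_1 be a real number with continued fraction expansion [b_0; b_1, …]. If |r − n_0/n_1| < 1/((2K+2) N (N−1)), then one of the following holds: (i) b_i = a_i for all i = 0, 1, …, L, and b_{L+1} ≥ K; or (ii) b_i = a_i for i = 0, 1, …, L−1, b_L = a_L − 1, b_{L+1} = 1, and b_{L+2} ≥ K. -/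
/-!
Let `p/q = n₀/n₁` and `p'/q'` be the last two convergents of `n₀/n₁ = [a₀; …, a_L]`. Then
`s ↦ (p s + p')/(q s + q')` sends `s` to `[a₀; …, a_L, s]` whenever `|s| > 1`, and
`p q' - p' q = ±1`. Solving `r = (p s + p')/(q s + q')` gives `|q s + q'| = 1/(q |r - n₀/n₁|)`,
which exceeds `(K + 1) q` because `q ≤ n₁ ≤ N` and `q² ≤ 2 N (N - 1)`; as `0 ≤ q' ≤ q`, this
forces `s > K` or `s < -(K + 1)`. In the first case the expansion of `r` continues with
`a_L, ⌊s⌋`; in the second `a_L + 1/s = [a_L - 1; 1, -s - 1]`.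
-/

/-- The complete quotients: `r = [b 0; …, b (n - 1), cfQuot r n]`. -/
noncomputable def cfQuot (r : ℝ) (n : ℕ) : ℝ :=
  (fun y : ℝ => (Int.fract y)⁻¹)^[n] r

theorem cfRem_eq_fract_cfQuot (r : ℝ) : ∀ n, cfRem r n = Int.fract (cfQuot r n)
  | 0 => rfl
  | n + 1 => by
    rw [cfQuot, Function.iterate_succ_apply', ← cfQuot, ← cfRem_eq_fract_cfQuot r n]
    rfl

theorem cfQuot_succ (r : ℝ) (n : ℕ) : cfQuot r (n + 1) = (cfRem r n)⁻¹ := by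
  rw [cfRem_eq_fract_cfQuot, cfQuot, Function.iterate_succ_apply', ← cfQuot]

theorem cfB_eq_floor_cfQuot (r : ℝ) : ∀ n, cfB r n = ⌊cfQuot r n⌋
  | 0 => rfl
  | n + 1 => by rw [cfQuot_succ]; rfl

theorem cfQuot_add (r : ℝ) (m n : ℕ) : cfQuot r (m + n) = cfQuot (cfQuot r n) m :=
  Function.iterate_add_apply _ m n r

theorem cfRem_add (r : ℝ) (m n : ℕ) : cfRem r (m + n) = cfRem (cfQuot r n) m := by
  rw [cfRem_eq_fract_cfQuot, cfRem_eq_fract_cfQuot, cfQuot_add]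

theorem cfB_add (r : ℝ) (m n : ℕ) : cfB r (m + n) = cfB (cfQuot r n) m := by
  rw [cfB_eq_floor_cfQuot, cfB_eq_floor_cfQuot, cfQuot_add]

theorem cfB_eq_and_cfQuot_succ_eq {r t : ℝ} {a : ℤ} {n : ℕ} (h : cfQuot r n = a + t⁻¹)
    (ht : 1 < t) : cfB r n = a ∧ cfQuot r (n + 1) = t := by
  have ht' : t⁻¹ ∈ Set.Ico 0 1 := ⟨inv_nonneg.2 (by linarith), inv_lt_one_of_one_lt₀ ht⟩
  refine ⟨?_, ?_⟩
  · rw [cfB_eq_floor_cfQuot, h, Int.floor_intCast_add, Int.floor_eq_zero_iff.2 ht', add_zero]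
  · rw [cfQuot_succ, cfRem_eq_fract_cfQuot, h, Int.fract_intCast_add, Int.fract_eq_self.2 ht',
      inv_inv]

theorem cfB_of_cfQuot_eq_add_inv_of_lt_neg_two {r s : ℝ} {a : ℤ} {n : ℕ}
    (h : cfQuot r n = a + s⁻¹) (hs : s < -2) :
    cfB r n = a - 1 ∧ cfB r (n + 1) = 1 ∧ cfB r (n + 2) = ⌊-s - 1⌋ := by
  have hs1 : -s - 1 ≠ 0 := by linarith
  have hs0 : s ≠ 0 := by linarith
  have hpos : 0 < (-s - 1)⁻¹ := inv_pos.2 (by linarith)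
  -- `a + 1/s = [a - 1; 1, -s - 1]`
  have hu : -s / (-s - 1) = ((1 : ℤ) : ℝ) + (-s - 1)⁻¹ := by push_cast; field_simp; ring
  have h' : cfQuot r n = ((a - 1 : ℤ) : ℝ) + (-s / (-s - 1))⁻¹ := by
    rw [h, inv_div]
    push_cast
    field_simp
    ring
  obtain ⟨hn, hn1⟩ := cfB_eq_and_cfQuot_succ_eq h' (by rw [hu]; push_cast; linarith)
  obtain ⟨hn1', hn2⟩ := cfB_eq_and_cfQuot_succ_eq (hn1.trans hu) (by linarith)
  exact ⟨hn, hn1', by rw [cfB_eq_floor_cfQuot, hn2]⟩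

noncomputable def mobius (p q p' q' : ℤ) (s : ℝ) : ℝ := (p * s + p') / (q * s + q')

theorem intCast_add_inv_mobius (a p q p' q' : ℤ) {s : ℝ} (h : (p : ℝ) * s + p' ≠ 0) :
    (a : ℝ) + (mobius p q p' q' s)⁻¹ = mobius (a * p + q) p (a * p' + q') p' s := by
  rw [mobius, mobius, inv_div, eq_div_iff h, add_mul, div_mul_cancel₀ _ h]
  push_cast
  ring

theorem mobius_intCast_one_one_zero (a : ℤ) {s : ℝ} (hs : s ≠ 0) :
    mobius a 1 1 0 s = a + s⁻¹ := by
  rw [mobius]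
  push_cast
  rw [one_mul, add_zero, add_div, mul_div_assoc, div_self hs, mul_one, one_div]

noncomputable def mobiusInv (p q p' q' : ℤ) (r : ℝ) : ℝ := (p' - q' * r) / (q * r - p)

theorem mul_mobiusInv_add (p q p' q' : ℤ) {r : ℝ} (hr : (q : ℝ) * r - p ≠ 0) :
    q * mobiusInv p q p' q' r + q' = -(p * q' - p' * q) / (q * r - p) := by
  rw [mobiusInv, mul_div_assoc', div_add' _ _ _ hr]
  ring_nf

theorem mobius_mobiusInv {p q p' q' : ℤ} {r : ℝ} (hdet : p * q' - p' * q ≠ 0)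
    (hr : (q : ℝ) * r - p ≠ 0) : mobius p q p' q' (mobiusInv p q p' q' r) = r := by
  have hdet' : ((p * q' - p' * q : ℤ) : ℝ) ≠ 0 := Int.cast_ne_zero.2 hdet
  push_cast at hdet'
  have hnum : p * mobiusInv p q p' q' r + p' = r * (-(p * q' - p' * q) / (q * r - p)) := by
    rw [mobiusInv, mul_div_assoc', div_add' _ _ _ hr]
    ring_nf
  rw [mobius, hnum, mul_mobiusInv_add p q p' q' hr,
    mul_div_cancel_right₀ _ (div_ne_zero (neg_ne_zero.2 hdet') hr)]

theorem lt_or_lt_neg_of_lt_abs_mul_add {q q' s K : ℝ} (hq : 0 < q) (hq' : 0 ≤ q')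
    (hq'q : q' ≤ q) (h : (K + 1) * q < |q * s + q'|) : K < s ∨ s < -(K + 1) := by
  rcases lt_abs.1 h with h | h
  · exact Or.inl (lt_of_mul_lt_mul_left (by linarith) hq.le)
  · exact Or.inr (lt_of_mul_lt_mul_left (by linarith) hq.le)

/-- For a real number `x` with expansion `[a 0; a 1, …, a L]`, the integers `p, q, p', q'` are
the numerators and denominators of its last two convergents (`p'/q' = 1/0` when `L = 0`), so that
`mobius p q p' q' s` is the number with expansion `[a 0; a 1, …, a L, s]`. -/
structure ContFracPrefix (x : ℝ) (L : ℕ) where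
  p : ℤ
  q : ℤ
  p' : ℤ
  q' : ℤ
  eq_div : x = p / q
  q_pos : 0 < q
  q'_nonneg : 0 ≤ q'
  q'_le : q' ≤ q
  abs_det : |p * q' - p' * q| = 1
  p'_mem_Icc : 1 < x → p' ∈ Set.Icc 0 p
  cfB_mobius : ∀ s : ℝ, 1 < |s| → ∀ i < L, cfB (mobius p q p' q' s) i = cfB x i
  cfQuot_mobius : ∀ s : ℝ, 1 < |s| → cfQuot (mobius p q p' q' s) L = cfB x L + s⁻¹
  one_lt_mobius : 1 < x → ∀ s : ℝ, 1 < |s| → 1 < mobius p q p' q' s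

namespace ContFracPrefix

def ofInt (a : ℤ) : ContFracPrefix a 0 where
  p := a
  q := 1
  p' := 1
  q' := 0
  eq_div := by simp
  q_pos := one_pos
  q'_nonneg := le_rfl
  q'_le := zero_le_one
  abs_det := by simp
  p'_mem_Icc ha := ⟨zero_le_one, by exact_mod_cast ha.le⟩
  cfB_mobius _ _ _ hi := absurd hi (Nat.not_lt_zero _)
  cfQuot_mobius s hs := by
    rw [mobius_intCast_one_one_zero a (abs_pos.1 (one_pos.trans hs)), cfB, Int.floor_intCast]
    rfl
  one_lt_mobius ha s hs := by
    have ha2 : (2 : ℝ) ≤ a := by exact_mod_cast (show (2 : ℤ) ≤ a by exact_mod_cast ha)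
    have hinv : |s⁻¹| < 1 := by rw [abs_inv]; exact inv_lt_one_of_one_lt₀ hs
    rw [mobius_intCast_one_one_zero a (abs_pos.1 (one_pos.trans hs))]
    linarith [neg_abs_le s⁻¹]

theorem mobius_cons {x : ℝ} {L : ℕ} (P : ContFracPrefix x L) (hx : 1 < x) (a : ℤ) {s : ℝ}
    (hs : 1 < |s|) :
    mobius (a * P.p + P.q) P.p (a * P.p' + P.q') P.p' s = a + (mobius P.p P.q P.p' P.q' s)⁻¹ := by
  refine (intCast_add_inv_mobius a _ _ _ _ fun h => ?_).symm
  have := P.one_lt_mobius hx s hs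
  rw [mobius, h, zero_div] at this
  exact absurd this (by norm_num)

theorem cfB_zero_and_cfQuot_one_mobius_cons {x : ℝ} {L : ℕ} (P : ContFracPrefix x L)
    (hx : 1 < x) (a : ℤ) {s : ℝ} (hs : 1 < |s|) :
    cfB (mobius (a * P.p + P.q) P.p (a * P.p' + P.q') P.p' s) 0 = a ∧
      cfQuot (mobius (a * P.p + P.q) P.p (a * P.p' + P.q') P.p' s) 1 =
        mobius P.p P.q P.p' P.q' s :=
  P.mobius_cons hx a hs ▸ cfB_eq_and_cfQuot_succ_eq (n := 0) rfl (P.one_lt_mobius hx s hs)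

theorem one_lt_cfQuot_one {x : ℝ} (hx : Int.fract x ≠ 0) : 1 < cfQuot x 1 := by
  rw [cfQuot_succ]
  exact one_lt_inv_iff₀.2 ⟨(Int.fract_nonneg x).lt_of_ne' hx, Int.fract_lt_one x⟩

theorem eq_floor_add_inv_cfQuot_one (x : ℝ) : x = ⌊x⌋ + (cfQuot x 1)⁻¹ := by
  rw [cfQuot_succ, inv_inv]
  exact (Int.floor_add_fract x).symm

noncomputable def cons {x : ℝ} {L : ℕ} (hx : Int.fract x ≠ 0)
    (P : ContFracPrefix (cfQuot x 1) L) : ContFracPrefix x (L + 1) :=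
  have hx' := one_lt_cfQuot_one hx
  have hp : 0 < P.p := by
    have hq : (0 : ℝ) < P.q := by exact_mod_cast P.q_pos
    have := P.eq_div ▸ hx'
    rw [lt_div_iff₀ hq] at this
    exact_mod_cast (show (0 : ℝ) < P.p by linarith)
  have hp' := P.p'_mem_Icc hx'
  { p := ⌊x⌋ * P.p + P.q
    q := P.p
    p' := ⌊x⌋ * P.p' + P.q'
    q' := P.p'
    eq_div := by
      conv_lhs => rw [eq_floor_add_inv_cfQuot_one x, P.eq_div, inv_div]
      have : (P.p : ℝ) ≠ 0 := by exact_mod_cast hp.ne'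
      push_cast
      field_simp
    q_pos := hp
    q'_nonneg := hp'.1
    q'_le := hp'.2
    abs_det := by rw [← P.abs_det, ← abs_neg]; ring_nf
    p'_mem_Icc := fun hx1 => by
      have ha : 1 ≤ ⌊x⌋ := Int.le_floor.2 (by exact_mod_cast hx1.le)
      have := P.q'_nonneg
      exact ⟨by nlinarith [hp'.1], by nlinarith [hp'.2, P.q'_le]⟩
    cfB_mobius := fun s hs i hi => by
      obtain ⟨h0, h1⟩ := P.cfB_zero_and_cfQuot_one_mobius_cons hx' ⌊x⌋ hs
      cases i with
      | zero => exact h0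
      | succ j => rw [cfB_add _ j 1, h1, P.cfB_mobius s hs j (by omega), ← cfB_add]
    cfQuot_mobius := fun s hs => by
      obtain ⟨-, h1⟩ := P.cfB_zero_and_cfQuot_one_mobius_cons hx' ⌊x⌋ hs
      rw [cfQuot_add _ L 1, h1, P.cfQuot_mobius s hs, cfB_add x L 1]
    one_lt_mobius := fun hx1 s hs => by
      have ha : (1 : ℝ) ≤ ⌊x⌋ := by exact_mod_cast Int.le_floor.2 (by exact_mod_cast hx1.le)
      have := inv_pos.2 (one_pos.trans (P.one_lt_mobius hx' s hs))
      rw [P.mobius_cons hx' ⌊x⌋ hs]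
      linarith }

theorem nonempty : ∀ (L : ℕ) (x : ℝ), cfRem x L = 0 → (∀ i < L, cfRem x i ≠ 0) →
    Nonempty (ContFracPrefix x L)
  | 0, x, hterm, _ => by
    obtain ⟨a, rfl⟩ := Int.fract_eq_zero_iff.1 hterm
    exact ⟨ofInt a⟩
  | L + 1, x, hterm, hnonterm => by
    obtain ⟨P⟩ := nonempty L (cfQuot x 1) (by rwa [← cfRem_add])
      fun i hi => by rw [← cfRem_add]; exact hnonterm (i + 1) (by omega)
    exact ⟨P.cons (hnonterm 0 L.succ_pos)⟩

theorem isCoprime {x : ℝ} {L : ℕ} (P : ContFracPrefix x L) : IsCoprime P.p P.q := by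
  rcases abs_eq zero_le_one |>.1 P.abs_det with h | h
  · exact ⟨P.q', -P.p', by linarith⟩
  · exact ⟨-P.q', P.p', by linarith⟩

theorem q_le_of_eq_div {x : ℝ} {L : ℕ} (P : ContFracPrefix x L) {m n : ℤ} (hn : 0 < n)
    (hx : x = m / n) : P.q ≤ n := by
  have hq : (P.q : ℝ) ≠ 0 := by exact_mod_cast P.q_pos.ne'
  have hn' : (n : ℝ) ≠ 0 := by exact_mod_cast hn.ne'
  have hcross : P.p * n = m * P.q := by
    have := P.eq_div.symm.trans hx
    rw [div_eq_div_iff hq hn'] at this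
    exact_mod_cast this
  exact Int.le_of_dvd hn (P.isCoprime.symm.dvd_of_dvd_mul_left ⟨m, by rw [hcross, mul_comm]⟩)

theorem exists_mobius_eq {x : ℝ} {L : ℕ} (P : ContFracPrefix x L) {r K : ℝ} (hK : 0 ≤ K)
    (hr : r ≠ x) (hclose : P.q ^ 2 * |r - x| < 1 / (K + 1)) :
    ∃ s, mobius P.p P.q P.p' P.q' s = r ∧ (K < s ∨ s < -(K + 1)) := by
  have hq : (0 : ℝ) < P.q := by exact_mod_cast P.q_pos
  have hd : (P.q : ℝ) * r - P.p = P.q * (r - x) := by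
    linear_combination (eq_div_iff hq.ne').1 P.eq_div
  have hd0 : (P.q : ℝ) * r - P.p ≠ 0 := hd ▸ mul_ne_zero hq.ne' (sub_ne_zero.2 hr)
  have hdet : P.p * P.q' - P.p' * P.q ≠ 0 := fun h => by simpa [h] using P.abs_det
  -- `r - p/q = ±1 / (q (q s + q'))`
  refine ⟨_, mobius_mobiusInv hdet hd0, lt_or_lt_neg_of_lt_abs_mul_add hq
    (by exact_mod_cast P.q'_nonneg : (0 : ℝ) ≤ P.q') (by exact_mod_cast P.q'_le) ?_⟩
  have hdet' : |((P.p * P.q' - P.p' * P.q : ℤ) : ℝ)| = 1 := by exact_mod_cast P.abs_det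
  push_cast at hdet'
  rw [mul_mobiusInv_add _ _ _ _ hd0, abs_div, abs_neg, hdet', hd, abs_mul, abs_of_pos hq,
    lt_one_div (by positivity) (by positivity)]
  rw [lt_div_iff₀ (by positivity)] at hclose ⊢
  linarith

end ContFracPrefix

theorem sq_mul_lt_one_div_of_lt {q N K ε : ℝ} (hq : 0 ≤ q) (hqN : q ≤ N) (hN : 2 ≤ N)
    (hK : 0 ≤ K) (hε : 0 ≤ ε) (h : ε < 1 / ((2 * K + 2) * N * (N - 1))) :
    q ^ 2 * ε < 1 / (K + 1) := by
  have hNN : 0 < 2 * N * (N - 1) := by nlinarith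
  calc q ^ 2 * ε ≤ 2 * N * (N - 1) * ε := by gcongr; nlinarith
    _ < 2 * N * (N - 1) * (1 / ((2 * K + 2) * N * (N - 1))) := by gcongr
    _ = 1 / (K + 1) := by
      have : N - 1 ≠ 0 := by linarith
      have : N ≠ 0 := by linarith
      have : K + 1 ≠ 0 := by linarith
      field_simp

theorem stmt_7_general (n₀ n₁ : ℤ) (hn1 : 0 < n₁) (N : ℤ) (hN : max n₁ 2 ≤ N)
    (K : ℤ) (hK : 0 < K) (L : ℕ)
    (hterm : cfRem ((n₀ : ℝ) / (n₁ : ℝ)) L = 0)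
    (hnonterm : ∀ i < L, cfRem ((n₀ : ℝ) / (n₁ : ℝ)) i ≠ 0)
    (r : ℝ) (hne : r ≠ (n₀ : ℝ) / (n₁ : ℝ))
    (hr : |r - (n₀ : ℝ) / (n₁ : ℝ)| <
      1 / ((2 * (K : ℝ) + 2) * (N : ℝ) * ((N : ℝ) - 1))) :
    ((∀ i ≤ L, cfB r i = cfB ((n₀ : ℝ) / (n₁ : ℝ)) i) ∧ K ≤ cfB r (L + 1)) ∨
    ((∀ i < L, cfB r i = cfB ((n₀ : ℝ) / (n₁ : ℝ)) i) ∧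
      cfB r L = cfB ((n₀ : ℝ) / (n₁ : ℝ)) L - 1 ∧ cfB r (L + 1) = 1 ∧
      K ≤ cfB r (L + 2)) := by
  obtain ⟨P⟩ := ContFracPrefix.nonempty L _ hterm hnonterm
  have hqN : (P.q : ℝ) ≤ N := by
    exact_mod_cast (P.q_le_of_eq_div hn1 rfl).trans (le_of_max_le_left hN)
  have hK' : (1 : ℝ) ≤ K := by exact_mod_cast hK
  obtain ⟨s, rfl, hs⟩ := P.exists_mobius_eq (by linarith) hne <| sq_mul_lt_one_div_of_lt
    (by exact_mod_cast P.q_pos.le) hqN (by exact_mod_cast le_of_max_le_right hN) (by linarith)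
    (abs_nonneg _) hr
  have habs : 1 < |s| := by rcases hs with hs | hs <;> rw [lt_abs] <;> [left; right] <;> linarith
  have hquot := P.cfQuot_mobius s habs
  rcases hs with hs | hs
  · obtain ⟨hL, hL1⟩ := cfB_eq_and_cfQuot_succ_eq hquot (by linarith)
    refine Or.inl ⟨fun i hi => ?_, ?_⟩
    · rcases hi.lt_or_eq with hi | rfl
      exacts [P.cfB_mobius s habs i hi, hL]
    · rw [cfB_eq_floor_cfQuot, hL1]
      exact Int.le_floor.2 hs.le
  · obtain ⟨hL, hL1, hL2⟩ := cfB_of_cfQuot_eq_add_inv_of_lt_neg_two hquot (by linarith)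
    exact Or.inr ⟨P.cfB_mobius s habs, hL, hL1, hL2 ▸ Int.le_floor.2 (by linarith)⟩

/-- Theorem 7: let `n₀/n₁` be a reduced rational number with `n₀, n₁` coprime
positive integers, `N ≥ max {n₁, 2}`, `K` a positive integer, and let
`[a 0; a 1, …, a L]` be the continued fraction expansion of `n₀/n₁`.  Let
`r ≠ n₀/n₁` be a real number with continued fraction expansion `[b 0; b 1, …]`.
If `|r − n₀/n₁| < 1/((2K+2) N (N−1))`, then either `b i = a i` for all `i ≤ L`
and `b (L+1) ≥ K`, or `b i = a i` for `i < L`, `b L = a L − 1`, `b (L+1) = 1`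
and `b (L+2) ≥ K`. -/
theorem stmt_7 (n₀ n₁ : ℤ) (hn0 : 0 < n₀) (hn1 : 0 < n₁)
    (hcop : Int.gcd n₀ n₁ = 1) (N : ℤ) (hN : max n₁ 2 ≤ N)
    (K : ℤ) (hK : 0 < K) (L : ℕ)
    (hterm : cfRem ((n₀ : ℝ) / (n₁ : ℝ)) L = 0)
    (hnonterm : ∀ i < L, cfRem ((n₀ : ℝ) / (n₁ : ℝ)) i ≠ 0)
    (r : ℝ) (hne : r ≠ (n₀ : ℝ) / (n₁ : ℝ))
    (hr : |r - (n₀ : ℝ) / (n₁ : ℝ)| <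
      1 / ((2 * (K : ℝ) + 2) * (N : ℝ) * ((N : ℝ) - 1))) :
    ((∀ i ≤ L, cfB r i = cfB ((n₀ : ℝ) / (n₁ : ℝ)) i) ∧ K ≤ cfB r (L + 1)) ∨
    ((∀ i < L, cfB r i = cfB ((n₀ : ℝ) / (n₁ : ℝ)) i) ∧
      cfB r L = cfB ((n₀ : ℝ) / (n₁ : ℝ)) L - 1 ∧ cfB r (L + 1) = 1 ∧
      K ≤ cfB r (L + 2)) :=
  stmt_7_general n₀ n₁ hn1 N hN K hK L hterm hnonterm r hne hr
end

section
/- Let a be an integer, K a positive integer, and r a real number with 0 < |r − a| < 1/(4K + 4), and let [b_0; b_1, b_2, …] be the continued fraction expansion of r. If r > a, then b_0 = a and b_1 > K. If r < a, then b_0 = a − 1, b_1 = 1, and b_2 > K. -/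
/-- The integer case (`n₁ = 1`) of the final theorem: let `a` be an integer,
`K` a positive integer, and `r` a real with `0 < |r − a| < 1/(4K+4)`, with
continued fraction expansion `[b 0; b 1, b 2, …]` (`b i = cfB r i`).
If `r > a` then `b 0 = a` and `b 1 > K`; if `r < a` then `b 0 = a − 1`,
`b 1 = 1` and `b 2 > K`. -/
theorem stmt_13 (a K : ℤ) (hK : 0 < K) (r : ℝ)
    (hne : 0 < |r - (a : ℝ)|)
    (hr : |r - (a : ℝ)| < 1 / (4 * (K : ℝ) + 4)) :
    ((a : ℝ) < r → cfB r 0 = a ∧ K < cfB r 1) ∧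
    (r < (a : ℝ) → cfB r 0 = a - 1 ∧ cfB r 1 = 1 ∧ K < cfB r 2) := by
  have hK1 : (1:ℝ) ≤ K := by exact_mod_cast hK
  have hpos : (0:ℝ) < 4 * K + 4 := by linarith
  constructor
  · intro h
    have hε : 0 < r - a := sub_pos.mpr h
    have habs : |r - (a:ℝ)| = r - a := abs_of_pos hε
    rw [habs] at hr
    have hε1 : r - a < 1 := by
      have : 1 / (4 * (K:ℝ) + 4) ≤ 1 := by
        rw [div_le_one hpos]; linarith
      linarith
    have hfloor : ⌊r⌋ = a := by
      rw [Int.floor_eq_iff]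
      constructor <;> [linarith; linarith]
    have hrem : cfRem r 0 = r - a := by
      simp [cfRem, Int.fract, hfloor]
    have hinv : 4 * (K:ℝ) + 4 < (r - a)⁻¹ := by
      rw [lt_inv_comm₀ hpos hε]
      rw [inv_eq_one_div]; linarith
    refine ⟨by simp [cfB, hfloor], ?_⟩
    show K < ⌊(cfRem r 0)⁻¹⌋
    rw [hrem]
    have : ((K:ℝ) + 1) ≤ (r - a)⁻¹ := by linarith
    have := Int.le_floor.mpr (by push_cast; linarith : ((K+1 : ℤ):ℝ) ≤ (r - a)⁻¹)
    omega
  · intro h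
    have hδ : 0 < (a:ℝ) - r := sub_pos.mpr h
    have habs : |r - (a:ℝ)| = (a:ℝ) - r := by rw [abs_sub_comm]; exact abs_of_pos hδ
    rw [habs] at hr
    have h8 : 1 / (4 * (K:ℝ) + 4) ≤ 1/8 := by
      apply div_le_div_of_nonneg_left (by norm_num) (by norm_num)
      linarith
    have hδ8 : (a:ℝ) - r < 1/8 := lt_of_lt_of_le hr h8
    have hfloor : ⌊r⌋ = a - 1 := by
      rw [Int.floor_eq_iff]
      push_cast
      constructor <;> linarith
    have hrem0 : cfRem r 0 = r - a + 1 := by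
      simp [cfRem, Int.fract, hfloor]
      push_cast; ring
    have hrem0pos : (0:ℝ) < r - a + 1 := by linarith
    have hrem0lt : r - a + 1 < 1 := by linarith
    have hinv0 : 1 < (r - a + 1)⁻¹ := by
      rw [lt_inv_comm₀ one_pos hrem0pos]; simpa using hrem0lt
    have hinv0lt : (r - a + 1)⁻¹ < 2 := by
      rw [inv_lt_comm₀ hrem0pos two_pos]; linarith
    have hb1 : ⌊(r - a + 1)⁻¹⌋ = 1 := by
      rw [Int.floor_eq_iff] <;> norm_num
      constructor <;> linarith
    have hrem1 : cfRem r 1 = (r - a + 1)⁻¹ - 1 := by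
      show Int.fract (cfRem r 0)⁻¹ = _
      rw [hrem0, Int.fract, hb1]
      norm_num
    have hrem1pos : 0 < (r - a + 1)⁻¹ - 1 := by linarith
    -- (r-a+1)⁻¹ - 1 = (a - r)/(r - a + 1)
    have key : (r - a + 1)⁻¹ - 1 = ((a:ℝ) - r) / (r - a + 1) := by
      rw [eq_div_iff hrem0pos.ne', sub_mul, inv_mul_cancel₀ hrem0pos.ne']
      ring
    have hfrac : ((a:ℝ) - r) / (r - a + 1) < 1 / (4 * K + 3) := by
      have hδK : ((a:ℝ) - r) * (4 * K + 4) < 1 := (lt_div_iff₀ hpos).mp hr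
      rw [div_lt_div_iff₀ hrem0pos (by linarith)]
      nlinarith
    have hinv1 : 4 * (K:ℝ) + 3 < ((r - a + 1)⁻¹ - 1)⁻¹ := by
      rw [key, lt_inv_comm₀ (by linarith) (by rw [← key]; exact hrem1pos)]
      rw [inv_eq_one_div]
      exact hfrac
    refine ⟨by simp [cfB, hfloor], ?_, ?_⟩
    · show ⌊(cfRem r 0)⁻¹⌋ = 1
      rw [hrem0]; exact hb1
    · show K < ⌊(cfRem r 1)⁻¹⌋
      rw [hrem1]
      have := Int.le_floor.mpr (by push_cast; linarith : ((K+1 : ℤ):ℝ) ≤ ((r - a + 1)⁻¹ - 1)⁻¹)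
      omega
end

section
/- Let x be a rational number whose reduced denominator is at most N, where N ≥ 2 is an integer, and let w be a real number with |x − w| < 1/(2N(N−1)). Then x is the unique rational number p/q with 1 ≤ q ≤ N satisfying |p/q − w| < 1/(2N(N−1)); that is, any two rationals with denominators at most N lying within distance 1/(2N(N−1)) of w are equal. -/
/-- The general accuracy criterion: let `x` be a rational number whose reduced
denominator is at most `N` (an integer `≥ 2`), and let `w` be a real number
with `|x − w| < 1/(2N(N−1))`.  Then any rational `p/q` with `1 ≤ q ≤ N` lying
within distance `1/(2N(N−1))` of `w` equals `x`; i.e. `x` is the unique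
rational with denominator at most `N` at distance less than `1/(2N(N−1))`
from `w`. -/
theorem stmt_14 (N : ℤ) (hN : 2 ≤ N) (x : ℚ) (hx : (x.den : ℤ) ≤ N)
    (w : ℝ) (hxw : |(x : ℝ) - w| < 1 / (2 * (N : ℝ) * ((N : ℝ) - 1))) :
    ∀ p q : ℤ, 1 ≤ q → q ≤ N →
      |(p : ℝ) / (q : ℝ) - w| < 1 / (2 * (N : ℝ) * ((N : ℝ) - 1)) →
      (p : ℝ) / (q : ℝ) = (x : ℝ) := by
  intro p q hq1 hqN hpq
  by_contra hne
  set d : ℤ := (x.den : ℤ) with hd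
  set n : ℤ := x.num with hn
  have hd1 : 1 ≤ d := by
    have := x.pos
    simp only [hd]
    exact_mod_cast x.den_pos
  have hq0 : (0:ℝ) < (q:ℝ) := by exact_mod_cast hq1
  have hd0 : (0:ℝ) < (d:ℝ) := by exact_mod_cast hd1
  have hN0 : (0:ℝ) < (N:ℝ) := by exact_mod_cast (by omega : (0:ℤ) < N)
  have hN1 : (1:ℝ) ≤ (N:ℝ) - 1 := by
    have : (2:ℝ) ≤ (N:ℝ) := by exact_mod_cast hN
    linarith
  have hMpos : (0:ℝ) < (N:ℝ) * ((N:ℝ) - 1) := by positivity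
  have hxr : (x:ℝ) = (n:ℝ) / (d:ℝ) := by
    rw [Rat.cast_def]; norm_cast
  set k : ℤ := p * d - n * q with hk
  have hdiff : (p:ℝ)/(q:ℝ) - (x:ℝ) = (k:ℝ)/((q:ℝ)*(d:ℝ)) := by
    rw [hxr, hk]; push_cast; field_simp
  have hk0 : k ≠ 0 := by
    intro h
    apply hne
    have : (p:ℝ)/(q:ℝ) - (x:ℝ) = 0 := by rw [hdiff, h]; simp
    linarith
  have hkabs : (1:ℝ) ≤ |(k:ℝ)| := by
    have := Int.one_le_abs hk0
    calc (1:ℝ) ≤ (|k| : ℤ) := by exact_mod_cast this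
    _ = |(k:ℝ)| := by push_cast; rfl
  -- upper bound via triangle inequality
  have h2 : 1 / (2 * (N:ℝ) * ((N:ℝ) - 1)) + 1 / (2 * (N:ℝ) * ((N:ℝ) - 1))
      = 1 / ((N:ℝ) * ((N:ℝ) - 1)) := by
    field_simp
    ring
  have hup : |(p:ℝ)/(q:ℝ) - (x:ℝ)| < 1 / ((N:ℝ) * ((N:ℝ) - 1)) := by
    have htri : |(p:ℝ)/(q:ℝ) - (x:ℝ)| ≤ |(p:ℝ)/(q:ℝ) - w| + |w - (x:ℝ)| :=
      abs_sub_le _ _ _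
    rw [abs_sub_comm w ((x:ℝ))] at htri
    linarith
  -- lower bound
  have hqd0 : (0:ℝ) < (q:ℝ) * (d:ℝ) := by positivity
  have habsdiff : |(p:ℝ)/(q:ℝ) - (x:ℝ)| = |(k:ℝ)| / ((q:ℝ)*(d:ℝ)) := by
    rw [hdiff, abs_div, abs_of_pos hqd0]
  have hlow : 1 / ((N:ℝ) * ((N:ℝ) - 1)) ≤ |(p:ℝ)/(q:ℝ) - (x:ℝ)| := by
    rw [habsdiff]
    by_cases hc : q * d ≤ N * (N - 1)
    · have hcr : (q:ℝ) * (d:ℝ) ≤ (N:ℝ) * ((N:ℝ) - 1) := by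
        have : ((q*d : ℤ) : ℝ) ≤ ((N*(N-1) : ℤ) : ℝ) := by exact_mod_cast hc
        push_cast at this; linarith
      calc 1 / ((N:ℝ) * ((N:ℝ) - 1)) ≤ 1 / ((q:ℝ)*(d:ℝ)) := by
            apply one_div_le_one_div_of_le hqd0 hcr
        _ ≤ |(k:ℝ)| / ((q:ℝ)*(d:ℝ)) := by gcongr
    · push_neg at hc
      have hqe : q = N ∧ d = N := by
        constructor <;> nlinarith
      obtain ⟨hqe, hde⟩ := hqe
      have hNk : N ∣ k := by
        rw [hk, hqe, hde]
        exact ⟨p - n, by ring⟩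
      have hkN : N ≤ |k| := Int.le_of_dvd (abs_pos.mpr hk0) ((dvd_abs N k).mpr hNk)
      have hkNr : (N:ℝ) ≤ |(k:ℝ)| := by
        calc (N:ℝ) ≤ ((|k| : ℤ) : ℝ) := by exact_mod_cast hkN
        _ = |(k:ℝ)| := by push_cast; rfl
      have hqdr : (q:ℝ) * (d:ℝ) = (N:ℝ) * (N:ℝ) := by
        rw [hqe, hde]
      rw [hqdr]
      have h1 : 1 / ((N:ℝ) * ((N:ℝ) - 1)) ≤ 1 / (N:ℝ) := by
        apply one_div_le_one_div_of_le hN0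
        nlinarith
      have h2' : 1 / (N:ℝ) = (N:ℝ) / ((N:ℝ)*(N:ℝ)) := by
        field_simp
      have h3 : (N:ℝ) / ((N:ℝ)*(N:ℝ)) ≤ |(k:ℝ)| / ((N:ℝ)*(N:ℝ)) := by
        gcongr
      linarith
  linarith
end
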